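/- Suppose b and σ satisfy the Lipschitz assumption. Let T > 0, let {xⁿ} be a sequence in C([-τ,T],ℝ^d) converging uniformly to x ∈ C([-τ,T],ℝ^d), and let {uⁿ} be a sequence in L²([0,T],ℝ^m) with uⁿ ∈ U_T(xⁿ) for each n, converging weakly in L²([0,T],ℝ^m) to u. Then u ∈ U_T(x), i.e., x(t) = x(0) + ∫₀ᵗ b(x_s)ds + ∫₀ᵗ σ(x_s)u(s)ds for all t ∈ [0,T]. -/

import Mathlib

open MeasureTheory Set Metric
open scoped ENNReal

noncomputable section

/-- `ℝ^d`. -/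
abbrev Vec (d : ℕ) := EuclideanSpace ℝ (Fin d)

/-- The state space `𝐂 = C([-τ,0],ℝ^d)`. -/
abbrev Hist (τ : ℝ) (d : ℕ) := C(Icc (-τ) (0:ℝ), Vec d)

/-- The path space `C([-τ,T],ℝ^d)`. -/
abbrev Traj (τ T : ℝ) (d : ℕ) := C(Icc (-τ) T, Vec d)

/-- Matrix acting on a vector. -/
def matVec {d m : ℕ} (M : Matrix (Fin d) (Fin m) ℝ) (v : Vec m) : Vec d :=
  WithLp.toLp 2 (fun i => ∑ j, M i j * v j)

/-- Squared Frobenius norm of a matrix. -/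
def frobSq {d m : ℕ} (M : Matrix (Fin d) (Fin m) ℝ) : ℝ := ∑ i, ∑ j, (M i j) ^ 2

/-- Frobenius norm of a matrix. -/
def frobNorm {d m : ℕ} (M : Matrix (Fin d) (Fin m) ℝ) : ℝ := Real.sqrt (frobSq M)

/-- Evaluation of a path at a time `t ∈ [-τ,T]` (clamped). -/
def ev {d : ℕ} {τ T : ℝ} (h : -τ ≤ T) (x : Traj τ T d) (t : ℝ) : Vec d :=
  x (projIcc (-τ) T h t)

/-- The history segment `x_t ∈ 𝐂` of a path `x ∈ C([-τ,T],ℝ^d)`, for `t ∈ [0,T]`. -/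
def seg {d : ℕ} {τ T : ℝ} (h : -τ ≤ T) (x : Traj τ T d) (t : ℝ) : Hist τ d :=
  ⟨fun s => x (projIcc (-τ) T h (t + s.1)),
    x.continuous.comp <| continuous_projIcc.comp <| continuous_const.add continuous_subtype_val⟩

/-- The uniform Lipschitz assumption on the coefficients:
`|b(φ)−b(ψ)|² + |σ(φ)−σ(ψ)|² ≤ κ₁ ‖φ−ψ‖²`. -/
def LipCoeff {d m : ℕ} {τ : ℝ} (b : Hist τ d → Vec d)
    (σ' : Hist τ d → Matrix (Fin d) (Fin m) ℝ) (κ₁ : ℝ) : Prop :=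
  ∀ φ ψ : Hist τ d, ‖b φ - b ψ‖ ^ 2 + frobSq (σ' φ - σ' ψ) ≤ κ₁ * ‖φ - ψ‖ ^ 2

/-- The linear growth bound `|b(φ)|² + |σ(φ)|² ≤ κ₂ (1 + ‖φ‖²)`. -/
def GrowthCoeff {d m : ℕ} {τ : ℝ} (b : Hist τ d → Vec d)
    (σ' : Hist τ d → Matrix (Fin d) (Fin m) ℝ) (κ₂ : ℝ) : Prop :=
  ∀ φ : Hist τ d, ‖b φ‖ ^ 2 + frobSq (σ' φ) ≤ κ₂ * (1 + ‖φ‖ ^ 2)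

/-- The set `U_T(x)` of controls `u ∈ L²([0,T],ℝ^m)` satisfying
`x(t) = x(0) + ∫₀ᵗ b(x_s) ds + ∫₀ᵗ σ(x_s) u(s) ds` for `t ∈ [0,T]`. -/
def controls {d m : ℕ} {τ T : ℝ} (h : -τ ≤ T) (b : Hist τ d → Vec d)
    (σ' : Hist τ d → Matrix (Fin d) (Fin m) ℝ) (x : Traj τ T d) : Set (ℝ → Vec m) :=
  {u | MemLp u 2 (volume.restrict (Icc 0 T)) ∧
    ∀ t ∈ Icc (0:ℝ) T,
      ev h x t = ev h x 0 + (∫ s in (0:ℝ)..t, b (seg h x s)) +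
        ∫ s in (0:ℝ)..t, matVec (σ' (seg h x s)) (u s)}

/-- The rate function `I_T(x) = inf_{u ∈ U_T(x)} ½∫₀ᵀ |u(s)|² ds` (with value `∞` if
`U_T(x) = ∅`). -/
def rate {d m : ℕ} {τ T : ℝ} (h : -τ ≤ T) (b : Hist τ d → Vec d)
    (σ' : Hist τ d → Matrix (Fin d) (Fin m) ℝ) (x : Traj τ T d) : ℝ≥0∞ :=
  ⨅ (u : ℝ → Vec m) (_ : u ∈ controls h b σ' x),
    ENNReal.ofReal ((1/2) * ∫ s in (0:ℝ)..T, ‖u s‖ ^ 2)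

open Classical in
/-- The rate function `I_T^φ(x)`, which is `I_T(x)` if `x₀ = φ` and `∞` otherwise. -/
def rateAt {d m : ℕ} {τ T : ℝ} (h : -τ ≤ T) (b : Hist τ d → Vec d)
    (σ' : Hist τ d → Matrix (Fin d) (Fin m) ℝ) (φ : Hist τ d) (x : Traj τ T d) : ℝ≥0∞ :=
  if seg h x 0 = φ then rate h b σ' x else ⊤


/-! A weakly convergent sequence in a Hilbert space is bounded (Banach–Steinhaus), so its inner
products against a strongly convergent sequence converge. Fix `t ∈ [0,T]`. The `i`-th component of
`∫₀ᵗ σ(xⁿ_s) uⁿ(s) ds` is the `L²` pairing of `uⁿ` with the `i`-th row of `σ(xⁿ_·)` on `(0,t]`, and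
these rows converge uniformly because `xⁿ → x` uniformly and `σ` is Lipschitz; hence
`∫₀ᵗ σ(xⁿ_s) uⁿ(s) ds → ∫₀ᵗ σ(x_s) u(s) ds`. The remaining terms of the controlled equation for `xⁿ`
converge to those for `x`, and the limits agree. -/

open scoped RealInnerProductSpace
open Filter Topology

def rowVec {d m : ℕ} (M : Matrix (Fin d) (Fin m) ℝ) (i : Fin d) : Vec m := WithLp.toLp 2 (M i)

theorem matVec_apply {d m : ℕ} (M : Matrix (Fin d) (Fin m) ℝ) (v : Vec m) (i : Fin d) :
    matVec M v i = ⟪v, rowVec M i⟫ := by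
  simp [matVec, rowVec, PiLp.inner_apply]

theorem uniformContinuous_rowVec {d m : ℕ} (i : Fin d) :
    UniformContinuous fun M : Matrix (Fin d) (Fin m) ℝ => rowVec M i :=
  (PiLp.uniformContinuous_toLp 2 _).comp (Pi.uniformContinuous_proj _ i)

theorem frobSq_nonneg {d m : ℕ} (M : Matrix (Fin d) (Fin m) ℝ) : 0 ≤ frobSq M :=
  Finset.sum_nonneg fun _ _ => Finset.sum_nonneg fun _ _ => sq_nonneg _

theorem sq_le_frobSq {d m : ℕ} (M : Matrix (Fin d) (Fin m) ℝ) (i : Fin d) (j : Fin m) :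
    M i j ^ 2 ≤ frobSq M :=
  calc M i j ^ 2 ≤ ∑ j', M i j' ^ 2 :=
        Finset.single_le_sum (fun _ _ => sq_nonneg _) (Finset.mem_univ j)
    _ ≤ frobSq M := Finset.single_le_sum (f := fun i => ∑ j', M i j' ^ 2)
        (fun _ _ => Finset.sum_nonneg fun _ _ => sq_nonneg _) (Finset.mem_univ i)

theorem tendsto_inner_of_weak_of_tendsto {𝕜 H : Type*} [RCLike 𝕜] [NormedAddCommGroup H]
    [InnerProductSpace 𝕜 H] [CompleteSpace H] {x : ℕ → H} {x₀ : H}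
    (hx : ∀ z, Tendsto (fun n => inner 𝕜 (x n) z) atTop (𝓝 (inner 𝕜 x₀ z)))
    {y : ℕ → H} {y₀ : H} (hy : Tendsto y atTop (𝓝 y₀)) :
    Tendsto (fun n => inner 𝕜 (x n) (y n)) atTop (𝓝 (inner 𝕜 x₀ y₀)) := by
  obtain ⟨C, hC⟩ : ∃ C, ∀ n, ‖x n‖ ≤ C := by
    obtain ⟨C, hC⟩ := banach_steinhaus (g := fun n => innerSL 𝕜 (x n))
      fun z =>
        let ⟨C, hC⟩ := (hx z).norm.bddAbove_range
        ⟨C, fun n => hC (mem_range_self n)⟩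
    exact ⟨C, fun n => by simpa using hC n⟩
  have herr : Tendsto (fun n => inner 𝕜 (x n) (y n - y₀)) atTop (𝓝 0) := by
    refine squeeze_zero_norm (fun n => (norm_inner_le_norm _ _).trans
      (mul_le_mul_of_nonneg_right (hC n) (norm_nonneg _))) ?_
    simpa using (tendsto_iff_norm_sub_tendsto_zero.1 hy).const_mul C
  simpa [inner_sub_right] using (hx y₀).add herr

theorem TendstoUniformly.tendsto_toLp {α F : Type*} [MeasurableSpace α] {μ : Measure α}
    [IsFiniteMeasure μ] [NormedAddCommGroup F] {p : ℝ≥0∞} [Fact (1 ≤ p)]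
    {f : ℕ → α → F} {g : α → F} (hf : ∀ n, MemLp (f n) p μ) (hg : MemLp g p μ)
    (hfg : TendstoUniformly f g atTop) :
    Tendsto (fun n => (hf n).toLp (f n)) atTop (𝓝 (hg.toLp g)) := by
  set D : ℝ := measureUnivNNReal μ ^ p.toReal⁻¹
  have hD : 0 ≤ D := by positivity
  refine Metric.tendsto_nhds.2 fun ε hε => ?_
  filter_upwards [Metric.tendstoUniformly_iff.1 hfg (ε / (D + 1)) (by positivity)] with n hn
  rw [dist_eq_norm, ← MemLp.toLp_sub]
  calc _ ≤ D * (ε / (D + 1)) := by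
        refine Lp.norm_le_of_ae_bound (by positivity) ?_
        filter_upwards [((hf n).sub hg).coeFn_toLp] with a ha
        rw [ha, Pi.sub_apply, ← dist_eq_norm, dist_comm]
        exact (hn a).le
    _ < ε := by
        rw [mul_div_assoc', div_lt_iff₀ (by positivity)]
        nlinarith

theorem Continuous.memLp_restrict_Ioc {F : Type*} [NormedAddCommGroup F] {f : ℝ → F}
    (hf : Continuous f) (p : ℝ≥0∞) (a b : ℝ) : MemLp f p (volume.restrict (Ioc a b)) := by
  obtain ⟨K, hK⟩ := isCompact_Icc.exists_bound_of_continuousOn (hf.continuousOn (s := Icc a b))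
  exact MemLp.of_bound hf.aestronglyMeasurable K
    ((ae_restrict_iff' measurableSet_Ioc).2
      (ae_of_all _ fun s hs => hK s (Ioc_subset_Icc_self hs)))

namespace MeasureTheory

variable {α E : Type*} [MeasurableSpace α] {μ : Measure α} [NormedAddCommGroup E]
  [InnerProductSpace ℝ E]

def WeakL2Tendsto (μ : Measure α) (f : ℕ → α → E) (g : α → E) : Prop :=
  ∀ φ : α → E, MemLp φ 2 μ →
    Tendsto (fun n => ∫ a, ⟪f n a, φ a⟫ ∂μ) atTop (𝓝 (∫ a, ⟪g a, φ a⟫ ∂μ))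

theorem MemLp.inner_toLp {f : α → E} (hf : MemLp f 2 μ) (φ : Lp E 2 μ) :
    ⟪hf.toLp f, φ⟫ = ∫ a, ⟪f a, φ a⟫ ∂μ := by
  rw [L2.inner_def]
  exact integral_congr_ae (hf.coeFn_toLp.mono fun a ha => by simp only [ha])

theorem MemLp.inner_toLp_toLp {f g : α → E} (hf : MemLp f 2 μ) (hg : MemLp g 2 μ) :
    ⟪hf.toLp f, hg.toLp g⟫ = ∫ a, ⟪f a, g a⟫ ∂μ := by
  rw [hf.inner_toLp]
  exact integral_congr_ae (hg.coeFn_toLp.mono fun a ha => by simp only [ha])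

theorem MemLp.integrable_inner {f g : α → E} (hf : MemLp f 2 μ) (hg : MemLp g 2 μ) :
    Integrable (fun a => ⟪f a, g a⟫) μ :=
  memLp_one_iff_integrable.1 ((innerSL ℝ).memLp_of_bilin 1 hf hg)

namespace WeakL2Tendsto

theorem restrict_of_subset {f : ℕ → α → E} {g : α → E} {s t : Set α}
    (hw : WeakL2Tendsto (μ.restrict t) f g) (hs : MeasurableSet s) (hst : s ⊆ t) :
    WeakL2Tendsto (μ.restrict s) f g := by
  intro φ hφ
  have hind : MemLp (s.indicator φ) 2 (μ.restrict t) := by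
    rwa [memLp_indicator_iff_restrict hs, Measure.restrict_restrict_of_subset hst]
  have hint (k : α → E) :
      ∫ a, ⟪k a, s.indicator φ a⟫ ∂μ.restrict t =
        ∫ a, ⟪k a, φ a⟫ ∂μ.restrict s := by
    rw [← Measure.restrict_restrict_of_subset hst, ← integral_indicator hs]
    congr 1 with a
    by_cases ha : a ∈ s <;> simp [ha]
  simpa only [hint] using hw _ hind

theorem tendsto_integral_inner [CompleteSpace E] {f : ℕ → α → E} {g : α → E}
    (hw : WeakL2Tendsto μ f g) (hf : ∀ n, MemLp (f n) 2 μ) (hg : MemLp g 2 μ)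
    {φ : ℕ → α → E} {φ₀ : α → E} (hφ : ∀ n, MemLp (φ n) 2 μ)
    (hφ₀ : MemLp φ₀ 2 μ)
    (hφφ₀ : Tendsto (fun n => (hφ n).toLp (φ n)) atTop (𝓝 (hφ₀.toLp φ₀))) :
    Tendsto (fun n => ∫ a, ⟪f n a, φ n a⟫ ∂μ) atTop
      (𝓝 (∫ a, ⟪g a, φ₀ a⟫ ∂μ)) := by
  have hweak (z : Lp E 2 μ) :
      Tendsto (fun n => ⟪(hf n).toLp (f n), z⟫) atTop (𝓝 ⟪hg.toLp g, z⟫) := by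
    simpa only [MemLp.inner_toLp] using hw z (Lp.memLp z)
  simpa only [MemLp.inner_toLp_toLp] using tendsto_inner_of_weak_of_tendsto hweak hφφ₀

theorem tendsto_intervalIntegral_matVec {d m : ℕ} {t : ℝ}
    (ht : 0 ≤ t) {u : ℕ → ℝ → Vec m} {u₀ : ℝ → Vec m}
    (hw : WeakL2Tendsto (volume.restrict (Ioc 0 t)) u u₀)
    (hu : ∀ n, MemLp (u n) 2 (volume.restrict (Ioc 0 t)))
    (hu₀ : MemLp u₀ 2 (volume.restrict (Ioc 0 t)))
    {A : ℕ → ℝ → Matrix (Fin d) (Fin m) ℝ} {A₀ : ℝ → Matrix (Fin d) (Fin m) ℝ}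
    (hA : ∀ n, Continuous (A n)) (hA₀ : Continuous A₀)
    (hAA₀ : TendstoUniformly A A₀ atTop) :
    Tendsto (fun n => ∫ s in (0:ℝ)..t, matVec (A n s) (u n s)) atTop
      (𝓝 (∫ s in (0:ℝ)..t, matVec (A₀ s) (u₀ s))) := by
  have hrow {B : ℝ → Matrix (Fin d) (Fin m) ℝ} (hB : Continuous B) (i : Fin d) :
      MemLp (fun s => rowVec (B s) i) 2 (volume.restrict (Ioc 0 t)) :=
    ((uniformContinuous_rowVec i).continuous.comp hB).memLp_restrict_Ioc 2 0 t
  have hcomp {w : ℝ → Vec m} (hwL2 : MemLp w 2 (volume.restrict (Ioc 0 t)))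
      {B : ℝ → Matrix (Fin d) (Fin m) ℝ} (hB : Continuous B) (i : Fin d) :
      (∫ s in (0:ℝ)..t, matVec (B s) (w s)) i =
        ∫ s in Ioc 0 t, ⟪w s, rowVec (B s) i⟫ := by
    rw [intervalIntegral.integral_of_le ht, eval_integral_piLp]
    · simp only [matVec_apply]
    · simpa only [matVec_apply] using fun j => hwL2.integrable_inner (hrow hB j)
  rw [(PiLp.homeomorph 2 (fun _ : Fin d => ℝ)).isInducing.tendsto_nhds_iff, tendsto_pi_nhds]
  intro i
  have hlim := hw.tendsto_integral_inner hu hu₀ (fun n => hrow (hA n) i) (hrow hA₀ i)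
    (((uniformContinuous_rowVec i).comp_tendstoUniformly hAA₀).tendsto_toLp _ _)
  rw [← hcomp hu₀ hA₀ i] at hlim
  exact hlim.congr fun n => (hcomp (hu n) (hA n) i).symm

end WeakL2Tendsto

end MeasureTheory

theorem LipschitzWith.of_dist_sq_le_mul {X Y : Type*} [PseudoMetricSpace X]
    [PseudoMetricSpace Y] {f : X → Y} {κ : ℝ}
    (h : ∀ x y, dist (f x) (f y) ^ 2 ≤ κ * dist x y ^ 2) :
    LipschitzWith (Real.toNNReal √κ) f :=
  LipschitzWith.of_dist_le_mul fun x y => by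
    rw [Real.coe_toNNReal _ (Real.sqrt_nonneg κ)]
    calc dist (f x) (f y) = √(dist (f x) (f y) ^ 2) := (Real.sqrt_sq dist_nonneg).symm
      _ ≤ √(κ * dist x y ^ 2) := Real.sqrt_le_sqrt (h x y)
      _ = √κ * dist x y := by rw [Real.sqrt_mul' _ (sq_nonneg _), Real.sqrt_sq dist_nonneg]

namespace LipCoeff

variable {d m : ℕ} {τ κ₁ : ℝ} {b : Hist τ d → Vec d}
  {σ' : Hist τ d → Matrix (Fin d) (Fin m) ℝ}

theorem uniformContinuous_drift (hlip : LipCoeff b σ' κ₁) : UniformContinuous b :=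
  (LipschitzWith.of_dist_sq_le_mul (κ := κ₁) fun φ ψ => by
    simpa only [dist_eq_norm] using
      (le_add_of_nonneg_right (frobSq_nonneg _)).trans (hlip φ ψ)).uniformContinuous

theorem uniformContinuous_diffusion (hlip : LipCoeff b σ' κ₁) : UniformContinuous σ' :=
  uniformContinuous_pi.2 fun i => uniformContinuous_pi.2 fun j =>
    (LipschitzWith.of_dist_sq_le_mul (κ := κ₁) fun φ ψ => by
      rw [Real.dist_eq, sq_abs, dist_eq_norm]
      exact (sq_le_frobSq (σ' φ - σ' ψ) i j).trans
        ((le_add_of_nonneg_left (sq_nonneg _)).trans (hlip φ ψ))).uniformContinuous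

end LipCoeff

section Segments

variable {d : ℕ} {τ T : ℝ} (h : -τ ≤ T)

theorem dist_seg_seg_le (x y : Traj τ T d) (t : ℝ) : dist (seg h x t) (seg h y t) ≤ dist x y :=
  (ContinuousMap.dist_le dist_nonneg).2 fun _ =>
    ContinuousMap.dist_apply_le_dist (f := x) (g := y) _

theorem continuous_seg (x : Traj τ T d) : Continuous (seg h x) := by
  let F : C(ℝ × Icc (-τ) (0:ℝ), Vec d) :=
    ⟨fun p => x (projIcc (-τ) T h (p.1 + p.2.1)),
      x.continuous.comp <| continuous_projIcc.comp <|
        continuous_fst.add (continuous_subtype_val.comp continuous_snd)⟩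
  exact F.curry.continuous

theorem tendstoUniformly_seg {xn : ℕ → Traj τ T d} {x : Traj τ T d}
    (hxn : Tendsto xn atTop (𝓝 x)) :
    TendstoUniformly (fun n => seg h (xn n)) (seg h x) atTop :=
  Metric.tendstoUniformly_iff.2 fun ε hε => (Metric.tendsto_nhds.1 hxn ε hε).mono
    fun n hn t => (dist_seg_seg_le h x (xn n) t).trans_lt (dist_comm (xn n) x ▸ hn)

theorem tendsto_intervalIntegral_comp_seg {F : Type*} [NormedAddCommGroup F] [NormedSpace ℝ F]
    {f : Hist τ d → F} (hf : UniformContinuous f) {xn : ℕ → Traj τ T d} {x : Traj τ T d}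
    (hxn : Tendsto xn atTop (𝓝 x)) (t : ℝ) :
    Tendsto (fun n => ∫ s in (0:ℝ)..t, f (seg h (xn n) s)) atTop
      (𝓝 (∫ s in (0:ℝ)..t, f (seg h x s))) :=
  (hf.comp_tendstoUniformly (tendstoUniformly_seg h hxn)).tendstoUniformlyOn
    |>.tendsto_intervalIntegral_of_continuousOn
      (Eventually.of_forall fun n => (hf.continuous.comp (continuous_seg h (xn n))).continuousOn)

end Segments

open scoped RealInnerProductSpace in
theorem stmt_17_general {d m : ℕ} {τ T : ℝ}
    (h : -τ ≤ T)
    (b : Hist τ d → Vec d) (σ' : Hist τ d → Matrix (Fin d) (Fin m) ℝ)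
    {κ₁ : ℝ} (hlip : LipCoeff b σ' κ₁)
    (xn : ℕ → Traj τ T d) (x : Traj τ T d)
    -- uniform convergence `xⁿ → x` (convergence in `C([-τ,T],ℝ^d)`)
    (hxn : Filter.Tendsto xn Filter.atTop (nhds x))
    (un : ℕ → ℝ → Vec m) (u : ℝ → Vec m)
    (hun : ∀ n : ℕ, un n ∈ controls h b σ' (xn n))
    (huL2 : MemLp u 2 (volume.restrict (Icc 0 T)))
    -- weak convergence `uⁿ → u` in `L²([0,T],ℝ^m)`
    (hweak : ∀ g : ℝ → Vec m, MemLp g 2 (volume.restrict (Icc 0 T)) →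
      Filter.Tendsto (fun n => ∫ s in (0:ℝ)..T, ⟪un n s, g s⟫) Filter.atTop
        (nhds (∫ s in (0:ℝ)..T, ⟪u s, g s⟫))) :
    u ∈ controls h b σ' x := by
  refine ⟨huL2, fun t ht => ?_⟩
  have htT : Ioc 0 t ⊆ Icc 0 T := Ioc_subset_Icc_self.trans (Icc_subset_Icc_right ht.2)
  have hw : WeakL2Tendsto (volume.restrict (Ioc 0 t)) un u := by
    refine WeakL2Tendsto.restrict_of_subset (t := Icc 0 T) (fun g hg => ?_) measurableSet_Ioc htT
    simpa only [intervalIntegral.integral_of_le (ht.1.trans ht.2),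
      ← integral_Icc_eq_integral_Ioc] using hweak g hg
  have hσ := hlip.uniformContinuous_diffusion
  have hdiff := hw.tendsto_intervalIntegral_matVec ht.1
    (fun n => (hun n).1.mono_measure (Measure.restrict_mono htT le_rfl))
    (huL2.mono_measure (Measure.restrict_mono htT le_rfl))
    (fun n => hσ.continuous.comp (continuous_seg h (xn n)))
    (hσ.continuous.comp (continuous_seg h x))
    (hσ.comp_tendstoUniformly (tendstoUniformly_seg h hxn))
  have hdrift := tendsto_intervalIntegral_comp_seg h hlip.uniformContinuous_drift hxn t
  have hev (r : ℝ) : Tendsto (fun n => ev h (xn n) r) atTop (𝓝 (ev h x r)) :=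
    ((continuous_eval_const _).tendsto x).comp hxn
  have hlim : Tendsto (fun n => ∫ s in (0:ℝ)..t, matVec (σ' (seg h (xn n) s)) (un n s)) atTop
      (𝓝 (ev h x t - ev h x 0 - ∫ s in (0:ℝ)..t, b (seg h x s))) :=
    (((hev t).sub (hev 0)).sub hdrift).congr fun n => by
      rw [(hun n).2 t ht]
      abel
  have hlimit : ev h x t - ev h x 0 - ∫ s in (0:ℝ)..t, b (seg h x s)
      = ∫ s in (0:ℝ)..t, matVec (σ' (seg h x s)) (u s) := tendsto_nhds_unique hlim hdiff
  rw [← hlimit]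
  abel

open scoped RealInnerProductSpace in
/-- closedness of the controlled equation under uniform convergence of paths
and weak `L²` convergence of controls: if `xⁿ → x` uniformly, `uⁿ ∈ U_T(xⁿ)` and `uⁿ → u`
weakly in `L²([0,T],ℝ^m)`, then `u ∈ U_T(x)`. -/
theorem stmt_17 {d m : ℕ} (hd : 0 < d) (hm : 0 < m) {τ T : ℝ} (hτ : 0 < τ) (hT : 0 < T)
    (h : -τ ≤ T)
    (b : Hist τ d → Vec d) (σ' : Hist τ d → Matrix (Fin d) (Fin m) ℝ)
    {κ₁ : ℝ} (hκ₁ : 0 < κ₁) (hlip : LipCoeff b σ' κ₁)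
    (xn : ℕ → Traj τ T d) (x : Traj τ T d)
    -- uniform convergence `xⁿ → x` (convergence in `C([-τ,T],ℝ^d)`)
    (hxn : Filter.Tendsto xn Filter.atTop (nhds x))
    (un : ℕ → ℝ → Vec m) (u : ℝ → Vec m)
    (hun : ∀ n : ℕ, un n ∈ controls h b σ' (xn n))
    (huL2 : MemLp u 2 (volume.restrict (Icc 0 T)))
    -- weak convergence `uⁿ → u` in `L²([0,T],ℝ^m)`
    (hweak : ∀ g : ℝ → Vec m, MemLp g 2 (volume.restrict (Icc 0 T)) →
      Filter.Tendsto (fun n => ∫ s in (0:ℝ)..T, ⟪un n s, g s⟫) Filter.atTop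
        (nhds (∫ s in (0:ℝ)..T, ⟪u s, g s⟫))) :
    u ∈ controls h b σ' x :=
  stmt_17_general h b σ' hlip xn x hxn un u hun huL2 hweak
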